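/- For every t > 0 and all R_+ , R_- > √3: Re G(ξ) ≤ 0 for every ξ ∈ Γ_+ (built with radius R_+), and Re H(ζ) ≥ 0 for every ζ ∈ Γ_- (built with radius R_-). Here Re G(i) = 0 and Re H(-i) = 0, so these are the steep-descent inequalities Re{G(ξ) - G(ξ_0)} ≤ 0 and Re{H(ζ) - H(ζ_0)} ≥ 0 at the critical points ξ_0 = i, ζ_0 = -i of Lemma 6.1. -/

import Mathlib

/-!
Writing `u = |ξ|²`, one has `Re G(ξ) = t (Im ξ · (1 - 1/u) - log u)`. For `u ≥ 1` the first term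
of the series of `log u = 2 artanh ((u - 1)/(u + 1))` gives `log u ≥ 2(u - 1)/(u + 1)`, so
`Re G(ξ) ≤ 0` as soon as `Im ξ · (u + 1) ≤ 2u`. On the two segments through `i`, with
`r = |ξ - i| ≤ 1`, this is `r²(1 - r) ≥ 0`; on the rest of `Γ₊` it follows from `Im ξ ≤ 3/2` and
`u ≥ 3`. Finally `Re H(ζ̄) = -Re G(ζ)` carries the bound over to `Γ₋ = conj Γ₊`.
-/

open scoped Real BigOperators

/-- `Re G(ξ)` for the spectral function `G(ξ) = -2t log ξ - it(ξ + ξ⁻¹)` (i.e. `x = -2t`). -/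
noncomputable def ReG (t : ℝ) (ξ : ℂ) : ℝ :=
  -2 * t * Real.log (‖ξ‖) + t * (ξ + ξ⁻¹).im

/-- `Re H(ζ)` for the spectral function `H(ζ) = 2t log ζ - it(ζ + ζ⁻¹)` (i.e. `x = -2t`). -/
noncomputable def ReH (t : ℝ) (ζ : ℂ) : ℝ :=
  2 * t * Real.log (‖ζ‖) + t * (ζ + ζ⁻¹).im

/-- The steep descent contour `Γ₊` built with radius `R`. -/
def GammaPlus (R : ℝ) : Set ℂ :=
  ({z | ∃ x : ℝ, 0 ≤ x ∧ z = Complex.I + (x : ℂ) * Complex.exp (Complex.I * ((Real.pi : ℂ) / 6))}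
      ∩ Metric.closedBall Complex.I 1) ∪
  ({z | ∃ x : ℝ, 0 ≤ x ∧ z = Complex.I + (x : ℂ) * Complex.exp (Complex.I * (5 * (Real.pi : ℂ) / 6))}
      ∩ Metric.closedBall Complex.I 1) ∪
  (({z | ∃ x : ℝ, 0 ≤ x ∧ z = Complex.I + Complex.exp (Complex.I * ((Real.pi : ℂ) / 6)) + (x : ℂ)}
      \ Metric.ball Complex.I 1) ∩ Metric.closedBall 0 R) ∪
  (({z | ∃ x : ℝ, 0 ≤ x ∧ z = Complex.I + Complex.exp (Complex.I * (5 * (Real.pi : ℂ) / 6)) - (x : ℂ)}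
      \ Metric.ball Complex.I 1) ∩ Metric.closedBall 0 R) ∪
  {z | ‖z‖ = R ∧ z.im ≤ 3 / 2}

/-- The steep descent contour `Γ₋` built with radius `R`: the mirror image of `Γ₊`
across the real axis. -/
def GammaMinus (R : ℝ) : Set ℂ :=
  (fun z => (starRingEnd ℂ) z) '' GammaPlus R

open Complex ComplexConjugate

lemma two_mul_sub_one_div_add_one_le_log {u : ℝ} (hu : 1 ≤ u) :
    2 * (u - 1) / (u + 1) ≤ Real.log u := by
  rcases hu.eq_or_lt with rfl | hu
  · simp
  -- the first term of the series `log (1 + a⁻¹) = ∑ 2 (2a+1)^{-(2k+1)}/(2k+1)` at `a = (u - 1)⁻¹`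
  have hsum := Real.hasSum_log_one_add_inv (inv_pos.2 (sub_pos.2 hu))
  rw [inv_inv, add_sub_cancel] at hsum
  refine le_of_eq_of_le ?_ (le_hasSum hsum 0 fun k _ => by positivity)
  have h1 : u - 1 ≠ 0 := (sub_pos.2 hu).ne'
  have h2 : 2 * (u - 1)⁻¹ + 1 = (u + 1) / (u - 1) := by field_simp; ring
  norm_num [h2, mul_div_assoc]

lemma ReG_eq (t : ℝ) (ξ : ℂ) :
    ReG t ξ = t * (ξ.im * (1 - (normSq ξ)⁻¹) - Real.log (normSq ξ)) := by
  rw [ReG, norm_def, Real.log_sqrt (normSq_nonneg ξ), add_im, inv_im]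
  ring

lemma ReH_conj (t : ℝ) (ξ : ℂ) : ReH t (conj ξ) = -ReG t ξ := by
  rw [ReH, ReG, norm_conj, ← map_inv₀, ← map_add, conj_im]
  ring

lemma ReG_nonpos_of_im_mul_le {t : ℝ} (ht : 0 ≤ t) {ξ : ℂ} (h1 : 1 ≤ normSq ξ)
    (h2 : ξ.im * (normSq ξ + 1) ≤ 2 * normSq ξ) : ReG t ξ ≤ 0 := by
  set u := normSq ξ
  have hu : 0 ≤ 1 - u⁻¹ := sub_nonneg.2 (inv_le_one_of_one_le₀ h1)
  have key : ξ.im * (1 - u⁻¹) ≤ 2 * (u - 1) / (u + 1) := by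
    rw [le_div_iff₀ (by linarith)]
    calc ξ.im * (1 - u⁻¹) * (u + 1) = (1 - u⁻¹) * (ξ.im * (u + 1)) := by ring
      _ ≤ (1 - u⁻¹) * (2 * u) := mul_le_mul_of_nonneg_left h2 hu
      _ = 2 * (u - 1) := by field_simp
  rw [ReG_eq]
  exact mul_nonpos_of_nonneg_of_nonpos ht
    (sub_nonpos.2 (key.trans (two_mul_sub_one_div_add_one_le_log h1)))

lemma ReG_nonpos_of_im_le {t : ℝ} (ht : 0 ≤ t) {ξ : ℂ} (h3 : 3 ≤ normSq ξ)
    (him : ξ.im ≤ 3 / 2) : ReG t ξ ≤ 0 :=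
  ReG_nonpos_of_im_mul_le ht (by linarith) (by nlinarith)

lemma ReG_nonpos_of_mem_ray {t : ℝ} (ht : 0 ≤ t) {s x : ℝ} (hs : s ^ 2 = 3 / 4) (hx : 0 ≤ x)
    (hball : I + x * ⟨s, 1 / 2⟩ ∈ Metric.closedBall I 1) : ReG t (I + x * ⟨s, 1 / 2⟩) ≤ 0 := by
  have hx1 : x ≤ 1 := by
    rw [Metric.mem_closedBall, dist_eq, add_sub_cancel_left, ← sq_le_one_iff₀ (norm_nonneg _),
      Complex.sq_norm, normSq_apply] at hball
    simp only [mul_re, mul_im, ofReal_re, ofReal_im] at hball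
    nlinarith
  have him : (I + x * ⟨s, 1 / 2⟩).im = 1 + x / 2 := by
    simp only [add_im, I_im, mul_im, ofReal_re, ofReal_im]
    ring
  have hu : normSq (I + x * ⟨s, 1 / 2⟩) = x ^ 2 + x + 1 := by
    rw [normSq_apply, him]
    simp only [add_re, I_re, mul_re, ofReal_re, ofReal_im]
    nlinarith
  apply ReG_nonpos_of_im_mul_le ht
  · rw [hu]; nlinarith
  · rw [hu, him]; nlinarith [mul_nonneg (sq_nonneg x) (sub_nonneg.2 hx1)]

lemma exp_I_mul_pi_div_six : exp (I * (π / 6)) = ⟨√3 / 2, 1 / 2⟩ := by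
  rw [show I * (π / 6) = ((π / 6 : ℝ) : ℂ) * I by push_cast; ring]
  apply Complex.ext
  · rw [exp_ofReal_mul_I_re, Real.cos_pi_div_six]
  · rw [exp_ofReal_mul_I_im, Real.sin_pi_div_six]

lemma exp_I_mul_five_pi_div_six : exp (I * (5 * π / 6)) = ⟨-(√3 / 2), 1 / 2⟩ := by
  rw [show I * (5 * π / 6) = ((π - π / 6 : ℝ) : ℂ) * I by push_cast; ring]
  apply Complex.ext
  · rw [exp_ofReal_mul_I_re, Real.cos_pi_sub, Real.cos_pi_div_six]
  · rw [exp_ofReal_mul_I_im, Real.sin_pi_sub, Real.sin_pi_div_six]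

lemma ReG_nonpos_of_mem_GammaPlus {t R : ℝ} (ht : 0 ≤ t) (hR : √3 ≤ R) {ξ : ℂ}
    (hξ : ξ ∈ GammaPlus R) : ReG t ξ ≤ 0 := by
  have h3 : √3 ^ 2 = 3 := Real.sq_sqrt (by norm_num)
  have hs : (√3 / 2) ^ 2 = 3 / 4 := by rw [div_pow, h3]; norm_num
  rw [GammaPlus, exp_I_mul_pi_div_six, exp_I_mul_five_pi_div_six] at hξ
  rcases hξ with (((⟨⟨x, hx, rfl⟩, hball⟩ | ⟨⟨x, hx, rfl⟩, hball⟩) | ⟨⟨⟨x, hx, rfl⟩, -⟩, -⟩) |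
    ⟨⟨⟨x, hx, rfl⟩, -⟩, -⟩) | ⟨hnorm, him⟩
  · exact ReG_nonpos_of_mem_ray ht hs hx hball
  · exact ReG_nonpos_of_mem_ray ht (by rwa [neg_sq]) hx hball
  · apply ReG_nonpos_of_im_le ht
    · simp only [normSq_apply, add_re, add_im, I_re, I_im, ofReal_re, ofReal_im]
      nlinarith [Real.sqrt_nonneg 3, mul_nonneg (Real.sqrt_nonneg 3) hx]
    · norm_num
  · apply ReG_nonpos_of_im_le ht
    · simp only [normSq_apply, add_re, add_im, sub_re, sub_im, I_re, I_im, ofReal_re, ofReal_im]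
      nlinarith [Real.sqrt_nonneg 3, mul_nonneg (Real.sqrt_nonneg 3) hx]
    · norm_num
  · refine ReG_nonpos_of_im_le ht ?_ him
    rw [← Complex.sq_norm, hnorm]
    nlinarith [Real.sqrt_nonneg 3]

theorem stmt14 (t : ℝ) (ht : 0 < t) (Rp Rm : ℝ)
    (hRp : Real.sqrt 3 < Rp) (hRm : Real.sqrt 3 < Rm) :
    (∀ ξ ∈ GammaPlus Rp, ReG t ξ ≤ 0) ∧ (∀ ζ ∈ GammaMinus Rm, 0 ≤ ReH t ζ) := by
  refine ⟨fun ξ hξ => ReG_nonpos_of_mem_GammaPlus ht.le hRp.le hξ, ?_⟩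
  rintro _ ⟨ξ, hξ, rfl⟩
  rw [ReH_conj, neg_nonneg]
  exact ReG_nonpos_of_mem_GammaPlus ht.le hRm.le hξ
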